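/- Let a₁, a₂, b₁, b₂ > 0 be reals, α = (a₁ + a₂)/2, d ≥ 0, and let F be a finite Borel measure on (0,∞). Let A₁, A₂ be real random variables on a probability space such that A₁ − A₂ is Gaussian with mean 0 and variance d. Then ∫₀^∞ √(b₁·b₂)/√(α + d·w) dF(w) = √π · E[ ∫₀^∞ ( ∫_ℝ √(b₁·b₂) · φ(z; A₁/√2, a₁/(4w)) · φ(z; A₂/√2, a₂/(4w)) dz ) · w^{−1/2} dF(w) ]. -/

import Mathlib

/-!
For fixed `w`, the `z`-integral is a Gaussian convolution: it equals the normal density at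
`(A₁ - A₂)/√2` with variance `(a₁ + a₂)/(4w)`, so after the factor `w^{-1/2}` the integrand becomes
`√(b₁ b₂) √(2/(π(a₁ + a₂))) exp(-w (A₁ - A₂)²/(a₁ + a₂))`. This is bounded for `w > 0`, so the
expectation can be moved inside the `F`-integral, and for `X ~ N(0, d)` one has
`E[exp(-t X²)] = (1 + 2dt)^{-1/2}`, which with `t = w/(a₁ + a₂)` gives the left-hand side.
-/

open MeasureTheory

/-- The density of a normal distribution with mean `m` and variance `v > 0`. -/
noncomputable def gaussPdf (z m v : ℝ) : ℝ :=
  (Real.sqrt (2 * Real.pi * v))⁻¹ * Real.exp (-(z - m) ^ 2 / (2 * v))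

open ProbabilityTheory Real Set
open scoped NNReal

lemma gaussPdf_mul_gaussPdf {v₁ v₂ : ℝ} (h₁ : 0 < v₁) (h₂ : 0 < v₂) (z m₁ m₂ : ℝ) :
    gaussPdf z m₁ v₁ * gaussPdf z m₂ v₂ =
      (√(2 * π * v₁) * √(2 * π * v₂))⁻¹ * exp (-(m₁ - m₂) ^ 2 / (2 * (v₁ + v₂))) *
        exp (-((v₁ + v₂) / (2 * v₁ * v₂)) * (z - (v₂ * m₁ + v₁ * m₂) / (v₁ + v₂)) ^ 2) := by
  unfold gaussPdf
  rw [mul_mul_mul_comm, ← exp_add, ← mul_inv, mul_assoc _ (exp _), ← exp_add]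
  congr 2
  field_simp
  ring

lemma integral_gaussPdf_mul_gaussPdf {v₁ v₂ : ℝ} (h₁ : 0 < v₁) (h₂ : 0 < v₂) (m₁ m₂ : ℝ) :
    ∫ z, gaussPdf z m₁ v₁ * gaussPdf z m₂ v₂ = gaussPdf (m₁ - m₂) 0 (v₁ + v₂) := by
  simp_rw [gaussPdf_mul_gaussPdf h₁ h₂]
  rw [integral_const_mul, integral_sub_right_eq_self (fun z ↦ exp (-_ * z ^ 2)), integral_gaussian,
    gaussPdf, sub_zero, mul_right_comm]
  congr 1
  rw [← sqrt_mul (by positivity), ← sqrt_inv, ← sqrt_mul (by positivity), ← sqrt_inv]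
  congr 1
  field_simp

lemma integral_exp_neg_mul_sq_gaussianReal (v : ℝ≥0) {t : ℝ} (ht : 0 ≤ t) :
    ∫ x, exp (-t * x ^ 2) ∂gaussianReal 0 v = (√(1 + 2 * v * t))⁻¹ := by
  rcases eq_or_ne v 0 with rfl | hv
  · simp [gaussianReal_zero_var]
  have hv' : (0 : ℝ) < v := by positivity
  have hdensity : ∀ x : ℝ, gaussianPDFReal 0 v x • exp (-t * x ^ 2)
      = (√(2 * π * v))⁻¹ * exp (-(t + (2 * (v : ℝ))⁻¹) * x ^ 2) := by
    intro x
    rw [gaussianPDFReal, smul_eq_mul, mul_assoc, ← exp_add]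
    congr 2
    field_simp
    ring
  simp_rw [integral_gaussianReal_eq_integral_smul hv, hdensity]
  rw [integral_const_mul, integral_gaussian, ← sqrt_inv, ← sqrt_mul (by positivity), ← sqrt_inv]
  congr 1
  field_simp
  ring

lemma integral_gaussPdf_mul_gaussPdf_mul_rpow {a₁ a₂ w : ℝ} (ha₁ : 0 < a₁) (ha₂ : 0 < a₂)
    (hw : 0 < w) (x₁ x₂ : ℝ) :
    (∫ z, gaussPdf z (x₁ / √2) (a₁ / (4 * w)) * gaussPdf z (x₂ / √2) (a₂ / (4 * w))) *
        w ^ (-(1 : ℝ) / 2) =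
      √(2 / (π * (a₁ + a₂))) * exp (-(w / (a₁ + a₂)) * (x₁ - x₂) ^ 2) := by
  have hrpow : w ^ (-(1 : ℝ) / 2) = (√w)⁻¹ := by rw [neg_div, rpow_neg hw.le, sqrt_eq_rpow]
  rw [integral_gaussPdf_mul_gaussPdf (by positivity) (by positivity), gaussPdf, sub_zero, hrpow,
    mul_right_comm]
  congr 1
  · rw [← sqrt_inv, ← sqrt_inv, ← sqrt_mul (by positivity)]
    congr 1
    field_simp
    ring
  · congr 1
    rw [← sub_div, div_pow, sq_sqrt zero_le_two]
    field_simp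
    ring

lemma integrable_exp_neg_mul_sq_prod (ν G : Measure ℝ) [IsFiniteMeasure ν] [IsFiniteMeasure G]
    (hG : ∀ᵐ w ∂G, 0 ≤ w) {c : ℝ} (hc : 0 ≤ c) :
    Integrable (fun p : ℝ × ℝ ↦ exp (-(p.2 / c) * p.1 ^ 2)) (ν.prod G) := by
  refine .of_bound (by fun_prop) 1 ?_
  filter_upwards [Measure.quasiMeasurePreserving_snd.ae hG] with p hp
  rw [norm_of_nonneg (exp_nonneg _), exp_le_one_iff, neg_mul]
  exact neg_nonpos.mpr (by positivity)

lemma integral_integral_exp_neg_mul_sq_gaussianReal (v : ℝ≥0) (G : Measure ℝ) [IsFiniteMeasure G]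
    (hG : ∀ᵐ w ∂G, 0 ≤ w) {c : ℝ} (hc : 0 ≤ c) :
    ∫ x, (∫ w, exp (-(w / c) * x ^ 2) ∂G) ∂gaussianReal 0 v =
      ∫ w, (√(1 + 2 * v * (w / c)))⁻¹ ∂G := by
  rw [integral_integral_swap (integrable_exp_neg_mul_sq_prod _ G hG hc)]
  refine integral_congr_ae ?_
  filter_upwards [hG] with w hw
  exact integral_exp_neg_mul_sq_gaussianReal v (by positivity)

theorem stmt6_general {Ω : Type*} [MeasurableSpace Ω] (μ : Measure Ω)
    (a₁ a₂ b₁ b₂ : ℝ) (ha₁ : 0 < a₁) (ha₂ : 0 < a₂)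
    (d : NNReal) (F : Measure ℝ) [IsFiniteMeasure F]
    (A₁ A₂ : Ω → ℝ)
    (hA : μ.map (fun ω => A₁ ω - A₂ ω) = ProbabilityTheory.gaussianReal 0 d) :
    (∫ w in Set.Ioi (0 : ℝ),
        Real.sqrt (b₁ * b₂) / Real.sqrt ((a₁ + a₂) / 2 + (d : ℝ) * w) ∂F) =
      Real.sqrt Real.pi *
        ∫ ω, (∫ w in Set.Ioi (0 : ℝ),
          (∫ z : ℝ, Real.sqrt (b₁ * b₂) *
            gaussPdf z (A₁ ω / Real.sqrt 2) (a₁ / (4 * w)) *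
            gaussPdf z (A₂ ω / Real.sqrt 2) (a₂ / (4 * w))) * w ^ (-(1 : ℝ) / 2) ∂F) ∂μ := by
  set c := a₁ + a₂
  have hc : 0 < c := by positivity
  have hX : AEMeasurable (fun ω ↦ A₁ ω - A₂ ω) μ :=
    .of_map_ne_zero (hA ▸ IsProbabilityMeasure.ne_zero _)
  have hkernel (ω : Ω) : ∫ w in Ioi 0, (∫ z, √(b₁ * b₂) *
        gaussPdf z (A₁ ω / √2) (a₁ / (4 * w)) * gaussPdf z (A₂ ω / √2) (a₂ / (4 * w))) *
          w ^ (-(1 : ℝ) / 2) ∂F =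
      √(b₁ * b₂) * √(2 / (π * c)) * ∫ w in Ioi 0, exp (-(w / c) * (A₁ ω - A₂ ω) ^ 2) ∂F := by
    rw [← integral_const_mul]
    refine setIntegral_congr_fun measurableSet_Ioi fun w hw ↦ ?_
    simp_rw [mul_assoc, integral_const_mul]
    rw [← integral_gaussPdf_mul_gaussPdf_mul_rpow ha₁ ha₂ hw]
    ring
  have hmeas : StronglyMeasurable fun x ↦ ∫ w in Ioi 0, exp (-(w / c) * x ^ 2) ∂F :=
    StronglyMeasurable.integral_prod_right' (f := fun p : ℝ × ℝ ↦ exp (-(p.2 / c) * p.1 ^ 2))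
      (by fun_prop : Measurable _).stronglyMeasurable
  simp_rw [hkernel]
  rw [integral_const_mul, ← integral_map hX hmeas.aestronglyMeasurable, hA,
    integral_integral_exp_neg_mul_sq_gaussianReal d _ (ae_restrict_of_forall_mem measurableSet_Ioi
      fun _ ↦ le_of_lt) hc.le, ← integral_const_mul, ← integral_const_mul]
  refine setIntegral_congr_fun measurableSet_Ioi fun w (hw : 0 < w) ↦ ?_
  have hfactor : √π * √(2 / (π * c)) * (√(1 + 2 * d * (w / c)))⁻¹ = (√(c / 2 + d * w))⁻¹ := by
    rw [← sqrt_mul pi_pos.le, ← sqrt_inv, ← sqrt_mul (by positivity), ← sqrt_inv]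
    congr 1
    field_simp
  rw [div_eq_mul_inv, ← hfactor]
  ring

/-- The representation identity (eq4) at the heart of the proofs of Theorem 1 and
Proposition 1: with `A₁ - A₂ ~ N(0, d)` (where `d` is the resistance distance) and `F` a
finite Borel measure on `(0, ∞)`,
`∫₀^∞ √(b₁ b₂)/√(α + d w) dF(w)`
`= √π · E[∫₀^∞ (∫ √(b₁ b₂) φ(z; A₁/√2, a₁/(4w)) φ(z; A₂/√2, a₂/(4w)) dz) w^{-1/2} dF(w)]`. -/
theorem stmt6 {Ω : Type*} [MeasurableSpace Ω] (μ : Measure Ω) [IsProbabilityMeasure μ]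
    (a₁ a₂ b₁ b₂ : ℝ) (ha₁ : 0 < a₁) (ha₂ : 0 < a₂) (hb₁ : 0 < b₁) (hb₂ : 0 < b₂)
    (d : NNReal) (F : Measure ℝ) [IsFiniteMeasure F]
    (A₁ A₂ : Ω → ℝ) (hA₁ : Measurable A₁) (hA₂ : Measurable A₂)
    (hA : μ.map (fun ω => A₁ ω - A₂ ω) = ProbabilityTheory.gaussianReal 0 d) :
    (∫ w in Set.Ioi (0 : ℝ),
        Real.sqrt (b₁ * b₂) / Real.sqrt ((a₁ + a₂) / 2 + (d : ℝ) * w) ∂F) =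
      Real.sqrt Real.pi *
        ∫ ω, (∫ w in Set.Ioi (0 : ℝ),
          (∫ z : ℝ, Real.sqrt (b₁ * b₂) *
            gaussPdf z (A₁ ω / Real.sqrt 2) (a₁ / (4 * w)) *
            gaussPdf z (A₂ ω / Real.sqrt 2) (a₂ / (4 * w))) * w ^ (-(1 : ℝ) / 2) ∂F) ∂μ :=
  stmt6_general μ a₁ a₂ b₁ b₂ ha₁ ha₂ d F A₁ A₂ hA
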